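/- For each coalition S ⊊ N in the discrete robust newsvendor game, the worst-case normalized value v_max(y,S) is a convex function of y on Y(N). -/

import Mathlib

/-!
Write `P_d(y, q) = (p - c) y - p ∑ⱼ (y - dⱼ)⁺ qⱼ` for the expected newsvendor profit.
Since `y ↦ P_d(y, q)` is concave, `y ↦ N / P_{d_N}(y, q)` is convex wherever the profit is
positive, provided `N ≥ 0`. Terms with a negative numerator need not be convex, but only
positive parts matter: the positive part of a bounded supremum is the supremum of the positive
parts, so it stays convex, and `v_max ≥ 0` because the smallest demand `γ = min_k d_k(S)` gives
a nonnegative numerator.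
-/

open Set Finset

def newsvendorProfit {κ : Type*} [Fintype κ] (p c : ℝ) (d q : κ → ℝ) (y : ℝ) : ℝ :=
  (p - c) * y - p * ∑ j, max (y - d j) 0 * q j

def newsvendorDomain {κ : Type*} [Fintype κ] (p c : ℝ) (d : κ → ℝ) (Q : Set (κ → ℝ)) :
    Set ℝ :=
  {y | 0 ≤ y ∧ ∀ q ∈ Q, 0 < newsvendorProfit p c d q y}

lemma ConcaveOn.convexOn_const_div {E : Type*} [AddCommMonoid E] [Module ℝ E]
    {s : Set E} {f : E → ℝ} (hf : ConcaveOn ℝ s f) (hf₀ : ∀ x ∈ s, 0 < f x) {N : ℝ}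
    (hN : 0 ≤ N) :
    ConvexOn ℝ s fun x => N / f x := by
  have hinv : ConvexOn ℝ (Ioi 0) fun t : ℝ => N / t := by
    simpa [div_eq_mul_inv] using (convexOn_zpow (𝕜 := ℝ) (-1)).smul hN
  refine ⟨hf.1, fun x hx y hy a b ha hb hab => ?_⟩
  have hcomb : 0 < a • f x + b • f y := convex_Ioi (0 : ℝ) (hf₀ x hx) (hf₀ y hy) ha hb hab
  calc N / f (a • x + b • y) ≤ N / (a • f x + b • f y) :=
        div_le_div_of_nonneg_left hN hcomb (hf.2 hx hy ha hb hab)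
    _ ≤ a • (N / f x) + b • (N / f y) := hinv.2 (hf₀ x hx) (hf₀ y hy) ha hb hab

lemma convexOn_max_ciSup_zero {E ι : Type*} [AddCommMonoid E] [Module ℝ E] {s : Set E}
    {f : ι → E → ℝ} (hs : Convex ℝ s) (hf : ∀ i, ConvexOn ℝ s fun x => max (f i x) 0)
    (hbdd : ∀ x ∈ s, BddAbove (range fun i => f i x)) :
    ConvexOn ℝ s fun x => max (⨆ i, f i x) 0 := by
  refine ⟨hs, fun x hx y hy a b ha hb hab => ?_⟩
  simp only [smul_eq_mul]
  refine max_le (Real.iSup_le (fun i => ?_) (by positivity)) (by positivity)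
  calc f i (a • x + b • y) ≤ max (f i (a • x + b • y)) 0 := le_max_left _ _
    _ ≤ a * max (f i x) 0 + b * max (f i y) 0 := by
        simpa only [smul_eq_mul] using (hf i).2 hx hy ha hb hab
    _ ≤ a * max (⨆ i, f i x) 0 + b * max (⨆ i, f i y) 0 := by
        gcongr
        exacts [le_ciSup (hbdd x hx) i, le_ciSup (hbdd y hy) i]

section Newsvendor

variable {κ : Type*} [Fintype κ] {p c : ℝ} {d : κ → ℝ} {Q : Set (κ → ℝ)}

lemma concaveOn_newsvendorProfit {q : κ → ℝ} (hp : 0 ≤ p) (hq : ∀ j, 0 ≤ q j) :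
    ConcaveOn ℝ univ (newsvendorProfit p c d q) := by
  refine ⟨convex_univ, fun x _ y _ a b ha hb hab => ?_⟩
  have hmax : ∀ j,
      max (a * x + b * y - d j) 0 ≤ a * max (x - d j) 0 + b * max (y - d j) 0 := by
    intro j
    refine max_le ?_ (by positivity)
    calc a * x + b * y - d j = a * (x - d j) + b * (y - d j) := by linear_combination d j * hab
      _ ≤ a * max (x - d j) 0 + b * max (y - d j) 0 := by gcongr <;> exact le_max_left _ _
  have hsum : ∑ j, max (a * x + b * y - d j) 0 * q j ≤
      a * ∑ j, max (x - d j) 0 * q j + b * ∑ j, max (y - d j) 0 * q j := by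
    rw [mul_sum, mul_sum, ← sum_add_distrib]
    refine sum_le_sum fun j _ => ?_
    nlinarith [mul_le_mul_of_nonneg_right (hmax j) (hq j)]
  simp only [newsvendorProfit, smul_eq_mul]
  nlinarith [mul_le_mul_of_nonneg_left hsum hp]

lemma newsvendorProfit_eq_of_forall_le {q : κ → ℝ} {y : ℝ} (h : ∀ j, y ≤ d j) :
    newsvendorProfit p c d q y = (p - c) * y := by
  simp [newsvendorProfit, h]

lemma continuous_newsvendorProfit_distribution (p c : ℝ) (d : κ → ℝ) (y : ℝ) :
    Continuous fun q : κ → ℝ => newsvendorProfit p c d q y := by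
  unfold newsvendorProfit
  fun_prop

lemma convex_newsvendorDomain (hp : 0 ≤ p) (hQ : ∀ q ∈ Q, ∀ j, 0 ≤ q j) :
    Convex ℝ (newsvendorDomain p c d Q) := fun _ hx _ hy _ _ ha hb hab =>
  ⟨convex_Ici (0 : ℝ) hx.1 hy.1 ha hb hab, fun q hq =>
    (convex_Ioi (0 : ℝ) (hx.2 q hq) (hy.2 q hq) ha hb hab).trans_le
      ((concaveOn_newsvendorProfit hp (hQ q hq)).2 trivial trivial ha hb hab)⟩

lemma convexOn_max_div_newsvendorProfit_zero (hp : 0 ≤ p) (hQ : ∀ q ∈ Q, ∀ j, 0 ≤ q j)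
    (N : ℝ) {q : κ → ℝ} (hq : q ∈ Q) :
    ConvexOn ℝ (newsvendorDomain p c d Q) fun y => max (N / newsvendorProfit p c d q y) 0 := by
  have hconc : ConcaveOn ℝ (newsvendorDomain p c d Q) (newsvendorProfit p c d q) :=
    (concaveOn_newsvendorProfit hp (hQ q hq)).subset (subset_univ _)
      (convex_newsvendorDomain hp hQ)
  refine (hconc.convexOn_const_div (fun y hy => hy.2 q hq) (le_max_right N 0)).congr
    fun y hy => ?_
  dsimp only
  rw [← max_div_div_right (hy.2 q hq).le, zero_div]

lemma bddAbove_range_div_newsvendorProfit (hQc : IsCompact Q) (d' : κ → ℝ) (γ : ℝ) {y : ℝ}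
    (hy : y ∈ newsvendorDomain p c d Q) :
    BddAbove (range fun q : Q => newsvendorProfit p c d' q γ / newsvendorProfit p c d q y) := by
  have : CompactSpace Q := isCompact_iff_compactSpace.mp hQc
  refine (isCompact_range ?_).bddAbove
  exact ((continuous_newsvendorProfit_distribution p c d' γ).comp continuous_subtype_val).div
    ((continuous_newsvendorProfit_distribution p c d y).comp continuous_subtype_val)
    fun q => (hy.2 q.1 q.2).ne'

end Newsvendor

theorem stmt_18_general {κ : Type*} [Fintype κ] [Nonempty κ]
    (p c : ℝ) (hc : 0 < c) (hcp : c < p)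
    (dS dN : κ → ℝ) (hdS : ∀ k, 0 ≤ dS k)
    (Q : Set (κ → ℝ)) (hQc : IsCompact Q)
    (hprob : ∀ q ∈ Q, (∀ k, 0 ≤ q k) ∧ ∑ k, q k = 1) :
    ConvexOn ℝ
      {y : ℝ | 0 ≤ y ∧ ∀ q ∈ Q, 0 < (p - c) * y - p * ∑ j, max (y - dN j) 0 * q j}
      (fun y : ℝ => ⨆ k : κ, ⨆ q : Q,
        ((p - c) * dS k - p * ∑ j, max (dS k - dS j) 0 * q.1 j) /
          ((p - c) * y - p * ∑ j, max (y - dN j) 0 * q.1 j)) := by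
  show ConvexOn ℝ (newsvendorDomain p c dN Q)
    fun y => ⨆ k, ⨆ q : Q, newsvendorProfit p c dS q (dS k) / newsvendorProfit p c dN q y
  have hp : 0 ≤ p := by linarith
  have hQ : ∀ q ∈ Q, ∀ j, 0 ≤ q j := fun q hq => (hprob q hq).1
  have hs := convex_newsvendorDomain (c := c) (d := dN) hp hQ
  have hinner : ∀ k, ConvexOn ℝ (newsvendorDomain p c dN Q) fun y =>
      max (⨆ q : Q, newsvendorProfit p c dS q (dS k) / newsvendorProfit p c dN q y) 0 :=
    fun k => convexOn_max_ciSup_zero hs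
      (fun q => convexOn_max_div_newsvendorProfit_zero hp hQ _ q.2)
      fun y hy => bddAbove_range_div_newsvendorProfit hQc dS (dS k) hy
  obtain ⟨k₀, hk₀⟩ := Finite.exists_min dS
  have hk₀_nonneg : ∀ q, 0 ≤ newsvendorProfit p c dS q (dS k₀) := fun q => by
    rw [newsvendorProfit_eq_of_forall_le hk₀]
    exact mul_nonneg (by linarith) (hdS k₀)
  refine (convexOn_max_ciSup_zero hs hinner fun y _ => (finite_range _).bddAbove).congr
    fun y hy => max_eq_left ?_
  exact Real.iSup_nonneg' ⟨k₀, Real.iSup_nonneg fun q =>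
    div_nonneg (hk₀_nonneg q) (hy.2 q q.2).le⟩

/-- In the discrete robust newsvendor game, for each coalition `S ⊊ N` the worst-case
normalized value
`v_max(y,S) = max_{γ ∈ {d_1(S),...,d_K(S)}} max_{q ∈ Q} num(γ,q) / den(y,q)`
is a convex function of `y` on `Y(N) = {y ≥ 0 : den(y,q) > 0 ∀ q ∈ Q}`. -/
theorem stmt_18 {κ : Type*} [Fintype κ] [Nonempty κ]
    (p c : ℝ) (hc : 0 < c) (hcp : c < p)
    (dS dN : κ → ℝ) (hdS : ∀ k, 0 ≤ dS k) (hdN : ∀ k, 0 ≤ dN k)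
    (Q : Set (κ → ℝ)) (hQne : Q.Nonempty) (hQc : IsCompact Q) (hQconv : Convex ℝ Q)
    (hprob : ∀ q ∈ Q, (∀ k, 0 ≤ q k) ∧ ∑ k, q k = 1) :
    ConvexOn ℝ
      {y : ℝ | 0 ≤ y ∧ ∀ q ∈ Q, 0 < (p - c) * y - p * ∑ j, max (y - dN j) 0 * q j}
      (fun y : ℝ => ⨆ k : κ, ⨆ q : Q,
        ((p - c) * dS k - p * ∑ j, max (dS k - dS j) 0 * q.1 j) /
          ((p - c) * y - p * ∑ j, max (y - dN j) 0 * q.1 j)) :=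
  stmt_18_general p c hc hcp dS dN hdS Q hQc hprob
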